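/- Let α, β ∈ ℕ and n ≥ 2. Then D_x^{α+β+3}[(x-1)^{β+1}(x+1)^{α+1} P_{n-1}^{β+1,α+1}(x)] = (1/2)·(n)_{α+β+3}·P_{n-2}^{α+2,β+2}(x). -/
import Mathlib

open Polynomial Finset


/-- Pochhammer symbol `(a)_k` for real `a`. -/
noncomputable def poch (a : ℝ) (k : ℕ) : ℝ := (ascPochhammer ℝ k).eval a

/-- The Jacobi polynomial
`P_n^{α,β}(x) = ((α+1)_n / n!) ⬝ ₂F₁(-n, n+α+β+1; α+1; (1-x)/2)`,
written as the terminating hypergeometric sum. -/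
noncomputable def jacobiP (n : ℕ) (a b x : ℝ) : ℝ :=
  (poch (a + 1) n / (Nat.factorial n : ℝ)) *
    ∑ k ∈ Finset.range (n + 1),
      (poch (-(n : ℝ)) k * poch ((n : ℝ) + a + b + 1) k) /
        (poch (a + 1) k * (Nat.factorial k : ℝ)) * ((1 - x) / 2) ^ k

lemma poch_zero (a : ℝ) : poch a 0 = 1 := by simp [poch]

lemma poch_succ_right (a : ℝ) (k : ℕ) : poch a (k+1) = poch a k * (a + k) := by
  simp [poch, ascPochhammer_succ_right]

lemma poch_succ_left (a : ℝ) (k : ℕ) : poch a (k+1) = a * poch (a+1) k := by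
  simp [poch, ascPochhammer_succ_left, Polynomial.eval_comp]

lemma poch_pos {a : ℝ} (ha : 0 < a) (k : ℕ) : 0 < poch a k := by
  induction k with
  | zero => simp [poch_zero]
  | succ k ih => rw [poch_succ_right]; positivity

lemma poch_add (a : ℝ) (i j : ℕ) : poch a (i + j) = poch a i * poch (a + i) j := by
  induction j with
  | zero => simp [poch_zero]
  | succ j ih =>
      rw [show i + (j+1) = (i+j)+1 from rfl, poch_succ_right, ih, poch_succ_right]
      push_cast; ring

/-- coefficient of the Jacobi polynomial in powers of `u = (1-x)/2`. -/
noncomputable def cJ (m : ℕ) (a b : ℝ) (k : ℕ) : ℝ :=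
  poch (a + 1) m / (Nat.factorial m : ℝ) *
    ((poch (-(m : ℝ)) k * poch ((m : ℝ) + a + b + 1) k) /
      (poch (a + 1) k * (Nat.factorial k : ℝ)))

lemma cJ_top (m : ℕ) (a b : ℝ) : cJ m a b (m+1) = 0 := by
  have : poch (-(m:ℝ)) (m+1) = 0 := by
    rw [poch_succ_right]; simp
  simp [cJ, this]

noncomputable def U : Polynomial ℝ := C (2⁻¹ : ℝ) * (1 - X)

lemma deriv_U : derivative U = C (-2⁻¹ : ℝ) := by
  simp [U, derivative_C_mul]

lemma eval_U (x : ℝ) : U.eval x = (1 - x)/2 := by simp [U]; ring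

noncomputable def Jp (m : ℕ) (a b : ℝ) : Polynomial ℝ :=
  ∑ k ∈ range (m+1), C (cJ m a b k) * U ^ k

lemma eval_Jp (m : ℕ) (a b x : ℝ) : (Jp m a b).eval x = jacobiP m a b x := by
  rw [Jp, jacobiP, Finset.mul_sum]
  rw [Polynomial.eval_finset_sum]
  refine Finset.sum_congr rfl fun k _ => ?_
  simp [cJ, eval_U, poch]
  ring

/-- shift helper -/
lemma sum_shift {M : Type*} [AddCommMonoid M] (m : ℕ) (F : ℕ → M)
    (h0 : F 0 = 0) (htop : F (m+1) = 0) :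
    ∑ k ∈ range (m+1), F k = ∑ i ∈ range (m+1), F (i+1) := by
  rw [Finset.sum_range_succ' F m, Finset.sum_range_succ (fun i => F (i+1)) m, h0, htop,
    add_zero]

lemma derivJp (m : ℕ) (a b : ℝ) :
    derivative (Jp m a b)
      = ∑ i ∈ range (m+1), C (cJ m a b (i+1) * ((i:ℝ)+1) * (-2⁻¹)) * U ^ i := by
  rw [Jp, derivative_sum]
  have h1 : ∀ k, derivative (C (cJ m a b k) * U ^ k)
      = C (cJ m a b k * (k:ℝ) * (-2⁻¹)) * U ^ (k-1) := by
    intro k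
    rw [derivative_C_mul, derivative_pow, deriv_U, C_mul, C_mul]
    ring
  simp only [h1]
  rw [sum_shift m (fun k => C (cJ m a b k * (k:ℝ) * (-2⁻¹)) * U ^ (k-1)) (by simp)
    (by simp [cJ_top])]
  refine Finset.sum_congr rfl fun i _ => ?_
  push_cast
  simp

lemma fact_ne (m : ℕ) : ((Nat.factorial m : ℕ):ℝ) ≠ 0 := by positivity

lemma poch_shift (a : ℝ) (ha : a ≠ 0) (k : ℕ) : poch (a+1) k = poch a k * (a+k) / a := by
  have h : a * poch (a+1) k = poch a k * (a+k) := by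
    rw [← poch_succ_left, poch_succ_right]
  field_simp
  linarith [h]

lemma key1 (a b : ℝ) (ha : 0 ≤ a) (m i : ℕ) :
    cJ (m+1) a b (i+1) * ((i:ℝ)+1) * (-2⁻¹)
      = (((m:ℝ)+a+b+2)/2) * cJ m (a+1) (b+1) i := by
  simp only [cJ, Nat.factorial_succ]
  push_cast
  rw [poch_succ_left (a+1) m]
  rw [show poch (-((m:ℝ)+1)) (i+1) = (-((m:ℝ)+1)) * poch (-(m:ℝ)) i by
      rw [poch_succ_left]; congr 1; ring]
  rw [show poch ((m:ℝ)+1+a+b+1) (i+1) = ((m:ℝ)+1+a+b+1) * poch ((m:ℝ)+(a+1)+(b+1)+1) i by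
      rw [poch_succ_left]; congr 1; ring]
  rw [poch_succ_left (a+1) i]
  have n1 : (a+1) ≠ 0 := by positivity
  have n2 : poch (a+1+1) i ≠ 0 := ne_of_gt (poch_pos (by positivity) i)
  have n3 := fact_ne m
  have n4 := fact_ne i
  have n5 : ((m:ℝ)+1) ≠ 0 := by positivity
  have n6 : ((i:ℝ)+1) ≠ 0 := by positivity
  field_simp
  ring

lemma key2 (p b : ℝ) (hp : 0 ≤ p) (m k : ℕ) :
    cJ m (p+1) b k * ((p+1+(k:ℝ)) * (-2⁻¹))
      = (-((m:ℝ)+p+1) * 2⁻¹) * cJ m p (b+1) k := by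
  have n1 : (p+1) ≠ 0 := by positivity
  simp only [cJ]
  rw [poch_shift (p+1) n1 m, poch_shift (p+1) n1 k,
    show (m:ℝ)+(p+1)+b+1 = (m:ℝ)+p+(b+1)+1 by ring]
  have n2 : poch (p+1) k ≠ 0 := ne_of_gt (poch_pos (by positivity) k)
  have n3 := fact_ne m
  have n4 := fact_ne k
  have n5 : (p+1+(k:ℝ)) ≠ 0 := by positivity
  field_simp
  ring

lemma key3 (a q : ℝ) (ha : 0 ≤ a) (m i : ℕ) :
    cJ m a (q+1) i * ((q+1+(i:ℝ)) * 2⁻¹) + cJ m a (q+1) (i+1) * (((i:ℝ)+1) * (-2⁻¹))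
      = (((m:ℝ)+q+1) * 2⁻¹) * cJ m (a+1) q i := by
  have n1 : (a+1) ≠ 0 := by positivity
  simp only [cJ]
  rw [poch_succ_right (-(m:ℝ)) i, poch_succ_right ((m:ℝ)+a+(q+1)+1) i,
    poch_succ_right (a+1) i, Nat.factorial_succ,
    poch_shift (a+1) n1 m, poch_shift (a+1) n1 i,
    show (m:ℝ)+(a+1)+q+1 = (m:ℝ)+a+(q+1)+1 by ring]
  have n2 : poch (a+1) i ≠ 0 := ne_of_gt (poch_pos (by positivity) i)
  have n3 := fact_ne m
  have n4 := fact_ne i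
  have n5 : (a+1+(i:ℝ)) ≠ 0 := by positivity
  have n6 : ((i:ℝ)+1) ≠ 0 := by positivity
  push_cast
  field_simp
  ring

lemma key4zero (p q : ℝ) (hp : 0 ≤ p) (m : ℕ) :
    cJ m (p+1) (q+1) 0 * ((p+1) * (-2⁻¹))
      = (-((m:ℝ)+1) * 2⁻¹) * cJ (m+1) p q 0 := by
  have n1 : (p+1) ≠ 0 := by positivity
  simp only [cJ, Nat.factorial_succ, poch_succ_left (p+1) m]
  simp only [show poch (p+1) 0 = 1 from by simp [poch], show poch (p+1+1) 0 = 1 from by simp [poch],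
    show ∀ c : ℝ, poch c 0 = 1 from fun c => by simp [poch]]
  have n3 := fact_ne m
  have n5 : ((m:ℝ)+1) ≠ 0 := by positivity
  push_cast
  field_simp

set_option maxHeartbeats 2000000 in
lemma key4succ (p q : ℝ) (hp : 0 ≤ p) (m i : ℕ) :
    cJ m (p+1) (q+1) (i+1) * ((p+1+((i:ℝ)+1)) * (-2⁻¹))
      + cJ m (p+1) (q+1) i * ((p+q+(i:ℝ)+2) * 2⁻¹)
      = (-((m:ℝ)+1) * 2⁻¹) * cJ (m+1) p q (i+1) := by
  have n1 : (p+1) ≠ 0 := by positivity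
  simp only [cJ, Nat.factorial_succ]
  push_cast
  rw [poch_succ_right (-(m:ℝ)) i,
    show poch ((m:ℝ)+(p+1)+(q+1)+1) (i+1)
        = poch ((m:ℝ)+(p+1)+(q+1)+1) i * ((m:ℝ)+p+q+3+i) by
      rw [poch_succ_right]; ring_nf,
    poch_succ_right (p+1+1) i,
    poch_succ_right (p+1) m,
    show poch (-((m:ℝ)+1)) (i+1) = (-((m:ℝ)+1)) * poch (-(m:ℝ)) i by
      rw [poch_succ_left]; congr 1; ring,
    show poch ((m:ℝ)+1+p+q+1) (i+1) = ((m:ℝ)+p+q+2) * poch ((m:ℝ)+(p+1)+(q+1)+1) i by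
      rw [poch_succ_left, show ((m:ℝ)+1+p+q+1) = (m:ℝ)+p+q+2 by ring,
        show ((m:ℝ)+p+q+2+1) = (m:ℝ)+(p+1)+(q+1)+1 by ring],
    poch_succ_right (p+1) i,
    poch_shift (p+1) n1 i, poch_shift (p+1) n1 m]
  have n2 : poch (p+1) i ≠ 0 := ne_of_gt (poch_pos (by positivity) i)
  have n3 := fact_ne m
  have n4 := fact_ne i
  have n5 : (p+1+(i:ℝ)) ≠ 0 := by positivity
  have n6 : ((i:ℝ)+1) ≠ 0 := by positivity
  have n7 : ((m:ℝ)+1) ≠ 0 := by positivity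
  field_simp
  ring

lemma dJp1 (m : ℕ) (a b : ℝ) (ha : 0 ≤ a) :
    derivative (Jp (m+1) a b) = C (((m:ℝ)+a+b+2)/2) * Jp m (a+1) (b+1) := by
  rw [derivJp, Jp, Finset.mul_sum, Finset.sum_range_succ _ (m+1), cJ_top]
  simp only [C_0, zero_mul, mul_zero, zero_mul, add_zero]
  refine Finset.sum_congr rfl fun i _ => ?_
  rw [key1 a b ha m i, C_mul, mul_assoc]

lemma dJp2 (m p : ℕ) (b : ℝ) :
    derivative (U^(p+1) * Jp m ((p:ℝ)+1) b)
      = C (-((m:ℝ)+(p:ℝ)+1) * 2⁻¹) * (U^p * Jp m (p:ℝ) (b+1)) := by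
  rw [Jp, Jp, Finset.mul_sum, Finset.mul_sum, Finset.mul_sum, derivative_sum]
  refine Finset.sum_congr rfl fun k _ => ?_
  have h1 : U^(p+1) * (C (cJ m ((p:ℝ)+1) b k) * U^k) = C (cJ m ((p:ℝ)+1) b k) * U^(p+1+k) := by
    rw [pow_add]; ring
  rw [h1, derivative_C_mul, derivative_pow, deriv_U]
  have h2 : p + 1 + k - 1 = p + k := by omega
  rw [h2]
  have h3 := key2 (p:ℝ) b (by positivity) m k
  calc C (cJ m ((p:ℝ)+1) b k) * (C ((p+1+k : ℕ) : ℝ) * U ^ (p+k) * C (-2⁻¹))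
      = C (cJ m ((p:ℝ)+1) b k * (((p:ℝ)+1+(k:ℝ)) * (-2⁻¹))) * U ^ (p+k) := by
        push_cast; simp only [C_mul]; ring
    _ = C (-((m:ℝ)+(p:ℝ)+1) * 2⁻¹ * cJ m (p:ℝ) (b+1) k) * U ^ (p+k) := by rw [h3]
    _ = C (-((m:ℝ)+(p:ℝ)+1) * 2⁻¹) * (U^p * (C (cJ m (p:ℝ) (b+1) k) * U^k)) := by
        simp only [C_mul, pow_add]; ring

lemma dV : derivative (1 - U : Polynomial ℝ) = C (2⁻¹ : ℝ) := by
  rw [derivative_sub, derivative_one, deriv_U]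
  rw [show (-2⁻¹ : ℝ) = -(2⁻¹) by norm_num, C_neg]
  ring

lemma shiftJ (m : ℕ) (a b : ℝ) :
    ∑ i ∈ range (m+1), C (cJ m a b (i+1) * ((i:ℝ)+1) * (-2⁻¹)) * U^(i+1)
      = ∑ k ∈ range (m+1), C (cJ m a b k * (k:ℝ) * (-2⁻¹)) * U^k := by
  rw [sum_shift m (fun k => C (cJ m a b k * (k:ℝ) * (-2⁻¹)) * U^k) (by simp)
    (by simp [cJ_top])]
  refine Finset.sum_congr rfl fun i _ => ?_
  push_cast
  ring_nf

lemma dJp3 (m q : ℕ) (a : ℝ) (ha : 0 ≤ a) :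
    derivative ((1-U)^(q+1) * Jp m a ((q:ℝ)+1))
      = C (((m:ℝ)+(q:ℝ)+1) * 2⁻¹) * ((1-U)^q * Jp m (a+1) (q:ℝ)) := by
  have hT : C (((q:ℝ)+1) * 2⁻¹) * Jp m a ((q:ℝ)+1)
      + (1 - U) * (∑ i ∈ range (m+1), C (cJ m a ((q:ℝ)+1) (i+1) * ((i:ℝ)+1) * (-2⁻¹)) * U^i)
      = C (((m:ℝ)+(q:ℝ)+1) * 2⁻¹) * Jp m (a+1) (q:ℝ) := by
    rw [one_sub_mul, Finset.mul_sum]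
    have hU : ∀ i : ℕ, U * (C (cJ m a ((q:ℝ)+1) (i+1) * ((i:ℝ)+1) * (-2⁻¹)) * U^i)
        = C (cJ m a ((q:ℝ)+1) (i+1) * ((i:ℝ)+1) * (-2⁻¹)) * U^(i+1) := by
      intro i; rw [pow_succ]; ring
    simp only [hU]
    rw [shiftJ, Jp, Jp, Finset.mul_sum, Finset.mul_sum, ← Finset.sum_sub_distrib,
      ← Finset.sum_add_distrib]
    refine Finset.sum_congr rfl fun i _ => ?_
    have hk := key3 a (q:ℝ) ha m i
    calc C (((q:ℝ)+1) * 2⁻¹) * (C (cJ m a ((q:ℝ)+1) i) * U^i)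
          + (C (cJ m a ((q:ℝ)+1) (i+1) * ((i:ℝ)+1) * (-2⁻¹)) * U^i
            - C (cJ m a ((q:ℝ)+1) i * (i:ℝ) * (-2⁻¹)) * U^i)
        = C (cJ m a ((q:ℝ)+1) i * (((q:ℝ)+1+(i:ℝ)) * 2⁻¹)
            + cJ m a ((q:ℝ)+1) (i+1) * (((i:ℝ)+1) * (-2⁻¹))) * U^i := by
          simp only [C_add, C_sub, C_mul, C_neg]; ring
      _ = C ((((m:ℝ)+(q:ℝ)+1) * 2⁻¹) * cJ m (a+1) (q:ℝ) i) * U^i := by rw [hk]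
      _ = C (((m:ℝ)+(q:ℝ)+1) * 2⁻¹) * (C (cJ m (a+1) (q:ℝ) i) * U^i) := by
          simp only [C_mul]; ring
  rw [derivative_mul, derivative_pow, dV, derivJp]
  calc C ((q+1 : ℕ) : ℝ) * (1-U)^(q+1-1) * C 2⁻¹ * Jp m a ((q:ℝ)+1)
        + (1-U)^(q+1) * (∑ i ∈ range (m+1), C (cJ m a ((q:ℝ)+1) (i+1) * ((i:ℝ)+1) * (-2⁻¹)) * U^i)
      = (1-U)^q * (C (((q:ℝ)+1) * 2⁻¹) * Jp m a ((q:ℝ)+1)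
          + (1 - U) * (∑ i ∈ range (m+1), C (cJ m a ((q:ℝ)+1) (i+1) * ((i:ℝ)+1) * (-2⁻¹)) * U^i)) := by
        push_cast
        simp only [Nat.add_sub_cancel, C_mul, pow_succ]
        ring
    _ = (1-U)^q * (C (((m:ℝ)+(q:ℝ)+1) * 2⁻¹) * Jp m (a+1) (q:ℝ)) := by rw [hT]
    _ = C (((m:ℝ)+(q:ℝ)+1) * 2⁻¹) * ((1-U)^q * Jp m (a+1) (q:ℝ)) := by ring

lemma shiftJ2 (m : ℕ) (a b : ℝ) :
    ∑ i ∈ range (m+1), C (cJ m a b (i+1) * ((i:ℝ)+1) * (-2⁻¹)) * U^(i+2)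
      = ∑ k ∈ range (m+1), C (cJ m a b k * (k:ℝ) * (-2⁻¹)) * U^(k+1) := by
  rw [sum_shift m (fun k => C (cJ m a b k * (k:ℝ) * (-2⁻¹)) * U^(k+1)) (by simp)
    (by simp [cJ_top])]
  refine Finset.sum_congr rfl fun i _ => ?_
  push_cast
  ring_nf

lemma dJp4T (m p q : ℕ) :
    C (-((p:ℝ)+1) * 2⁻¹) * ((1-U) * Jp m ((p:ℝ)+1) ((q:ℝ)+1))
      + C (((q:ℝ)+1) * 2⁻¹) * (U * Jp m ((p:ℝ)+1) ((q:ℝ)+1))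
      + (U * (1-U)) * (∑ i ∈ range (m+1), C (cJ m ((p:ℝ)+1) ((q:ℝ)+1) (i+1) * ((i:ℝ)+1) * (-2⁻¹)) * U^i)
      = C (-((m:ℝ)+1) * 2⁻¹) * Jp (m+1) (p:ℝ) (q:ℝ) := by
  have hA : C (-((p:ℝ)+1)*2⁻¹) * ((1-U) * Jp m ((p:ℝ)+1) ((q:ℝ)+1))
      = (∑ k ∈ range (m+1), C (cJ m ((p:ℝ)+1) ((q:ℝ)+1) k * (-((p:ℝ)+1)*2⁻¹)) * U^k)
        + ∑ k ∈ range (m+1), C (cJ m ((p:ℝ)+1) ((q:ℝ)+1) k * (((p:ℝ)+1)*2⁻¹)) * U^(k+1) := by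
    rw [Jp, Finset.mul_sum, Finset.mul_sum, ← Finset.sum_add_distrib]
    refine Finset.sum_congr rfl fun k _ => ?_
    simp only [C_mul, C_neg, pow_succ]
    ring
  have hB : C (((q:ℝ)+1)*2⁻¹) * (U * Jp m ((p:ℝ)+1) ((q:ℝ)+1))
      = ∑ k ∈ range (m+1), C (cJ m ((p:ℝ)+1) ((q:ℝ)+1) k * (((q:ℝ)+1)*2⁻¹)) * U^(k+1) := by
    rw [Jp, Finset.mul_sum, Finset.mul_sum]
    refine Finset.sum_congr rfl fun k _ => ?_
    simp only [C_mul, pow_succ]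
    ring
  have hC : (U * (1-U)) * (∑ i ∈ range (m+1), C (cJ m ((p:ℝ)+1) ((q:ℝ)+1) (i+1) * ((i:ℝ)+1) * (-2⁻¹)) * U^i)
      = (∑ k ∈ range (m+1), C (cJ m ((p:ℝ)+1) ((q:ℝ)+1) k * (k:ℝ) * (-2⁻¹)) * U^k)
        - ∑ k ∈ range (m+1), C (cJ m ((p:ℝ)+1) ((q:ℝ)+1) k * (k:ℝ) * (-2⁻¹)) * U^(k+1) := by
    rw [Finset.mul_sum]
    have h1 : ∀ i : ℕ, (U*(1-U)) * (C (cJ m ((p:ℝ)+1) ((q:ℝ)+1) (i+1) * ((i:ℝ)+1) * (-2⁻¹)) * U^i)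
        = C (cJ m ((p:ℝ)+1) ((q:ℝ)+1) (i+1) * ((i:ℝ)+1) * (-2⁻¹)) * U^(i+1)
          - C (cJ m ((p:ℝ)+1) ((q:ℝ)+1) (i+1) * ((i:ℝ)+1) * (-2⁻¹)) * U^(i+2) := by
      intro i
      rw [show i+2 = (i+1)+1 from rfl, pow_succ, pow_succ]
      ring
    simp only [h1]
    rw [Finset.sum_sub_distrib, shiftJ, shiftJ2]
  rw [hA, hB, hC]
  have hsplit : (∑ k ∈ range (m+1), C (cJ m ((p:ℝ)+1) ((q:ℝ)+1) k * (-((p:ℝ)+1)*2⁻¹)) * U^k)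
        + (∑ k ∈ range (m+1), C (cJ m ((p:ℝ)+1) ((q:ℝ)+1) k * (((p:ℝ)+1)*2⁻¹)) * U^(k+1))
        + (∑ k ∈ range (m+1), C (cJ m ((p:ℝ)+1) ((q:ℝ)+1) k * (((q:ℝ)+1)*2⁻¹)) * U^(k+1))
        + ((∑ k ∈ range (m+1), C (cJ m ((p:ℝ)+1) ((q:ℝ)+1) k * (k:ℝ) * (-2⁻¹)) * U^k)
          - ∑ k ∈ range (m+1), C (cJ m ((p:ℝ)+1) ((q:ℝ)+1) k * (k:ℝ) * (-2⁻¹)) * U^(k+1))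
      = (∑ k ∈ range (m+1), C (cJ m ((p:ℝ)+1) ((q:ℝ)+1) k * (((p:ℝ)+1+(k:ℝ)) * (-2⁻¹))) * U^k)
        + ∑ k ∈ range (m+1), C (cJ m ((p:ℝ)+1) ((q:ℝ)+1) k * (((p:ℝ)+(q:ℝ)+(k:ℝ)+2) * 2⁻¹)) * U^(k+1) := by
    have g1 : (∑ k ∈ range (m+1), C (cJ m ((p:ℝ)+1) ((q:ℝ)+1) k * (-((p:ℝ)+1)*2⁻¹)) * U^k)
          + (∑ k ∈ range (m+1), C (cJ m ((p:ℝ)+1) ((q:ℝ)+1) k * (k:ℝ) * (-2⁻¹)) * U^k)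
        = ∑ k ∈ range (m+1), C (cJ m ((p:ℝ)+1) ((q:ℝ)+1) k * (((p:ℝ)+1+(k:ℝ)) * (-2⁻¹))) * U^k := by
      rw [← Finset.sum_add_distrib]
      refine Finset.sum_congr rfl fun k _ => ?_
      simp only [C_mul, C_add, C_neg]
      ring
    have g2 : (∑ k ∈ range (m+1), C (cJ m ((p:ℝ)+1) ((q:ℝ)+1) k * (((p:ℝ)+1)*2⁻¹)) * U^(k+1))
          + (∑ k ∈ range (m+1), C (cJ m ((p:ℝ)+1) ((q:ℝ)+1) k * (((q:ℝ)+1)*2⁻¹)) * U^(k+1))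
          - (∑ k ∈ range (m+1), C (cJ m ((p:ℝ)+1) ((q:ℝ)+1) k * (k:ℝ) * (-2⁻¹)) * U^(k+1))
        = ∑ k ∈ range (m+1), C (cJ m ((p:ℝ)+1) ((q:ℝ)+1) k * (((p:ℝ)+(q:ℝ)+(k:ℝ)+2) * 2⁻¹)) * U^(k+1) := by
      rw [← Finset.sum_add_distrib, ← Finset.sum_sub_distrib]
      refine Finset.sum_congr rfl fun k _ => ?_
      simp only [C_mul, C_add, C_sub, C_neg, C_1, map_ofNat]
      ring
    calc _ = ((∑ k ∈ range (m+1), C (cJ m ((p:ℝ)+1) ((q:ℝ)+1) k * (-((p:ℝ)+1)*2⁻¹)) * U^k)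
          + (∑ k ∈ range (m+1), C (cJ m ((p:ℝ)+1) ((q:ℝ)+1) k * (k:ℝ) * (-2⁻¹)) * U^k))
        + ((∑ k ∈ range (m+1), C (cJ m ((p:ℝ)+1) ((q:ℝ)+1) k * (((p:ℝ)+1)*2⁻¹)) * U^(k+1))
          + (∑ k ∈ range (m+1), C (cJ m ((p:ℝ)+1) ((q:ℝ)+1) k * (((q:ℝ)+1)*2⁻¹)) * U^(k+1))
          - (∑ k ∈ range (m+1), C (cJ m ((p:ℝ)+1) ((q:ℝ)+1) k * (k:ℝ) * (-2⁻¹)) * U^(k+1))) := by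
          ring
      _ = _ := by rw [g1, g2]
  rw [hsplit, Jp, Finset.mul_sum,
    Finset.sum_range_succ' (fun j => C (-((m:ℝ)+1)*2⁻¹) * (C (cJ (m+1) (p:ℝ) (q:ℝ) j) * U^j)) (m+1),
    Finset.sum_range_succ' (fun k => C (cJ m ((p:ℝ)+1) ((q:ℝ)+1) k * (((p:ℝ)+1+(k:ℝ)) * (-2⁻¹))) * U^k) m]
  have hpad : ∑ i ∈ range m,
        C (cJ m ((p:ℝ)+1) ((q:ℝ)+1) (i+1) * (((p:ℝ)+1+((i+1:ℕ):ℝ)) * (-2⁻¹))) * U^(i+1)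
      = ∑ i ∈ range (m+1),
        C (cJ m ((p:ℝ)+1) ((q:ℝ)+1) (i+1) * (((p:ℝ)+1+((i+1:ℕ):ℝ)) * (-2⁻¹))) * U^(i+1) := by
    rw [Finset.sum_range_succ
      (fun i => C (cJ m ((p:ℝ)+1) ((q:ℝ)+1) (i+1) * (((p:ℝ)+1+((i+1:ℕ):ℝ)) * (-2⁻¹))) * U^(i+1)) m,
      cJ_top]
    simp
  rw [hpad, add_right_comm, ← Finset.sum_add_distrib]
  congr 1
  · refine Finset.sum_congr rfl fun i _ => ?_
    have hk := key4succ (p:ℝ) (q:ℝ) (by positivity) m i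
    calc C (cJ m ((p:ℝ)+1) ((q:ℝ)+1) (i+1) * (((p:ℝ)+1+((i+1:ℕ):ℝ)) * (-2⁻¹))) * U^(i+1)
          + C (cJ m ((p:ℝ)+1) ((q:ℝ)+1) i * (((p:ℝ)+(q:ℝ)+(i:ℝ)+2) * 2⁻¹)) * U^(i+1)
        = C (cJ m ((p:ℝ)+1) ((q:ℝ)+1) (i+1) * (((p:ℝ)+1+((i:ℝ)+1)) * (-2⁻¹))
            + cJ m ((p:ℝ)+1) ((q:ℝ)+1) i * (((p:ℝ)+(q:ℝ)+(i:ℝ)+2) * 2⁻¹)) * U^(i+1) := by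
          push_cast
          simp only [C_add, C_mul, C_neg]
          ring
      _ = C ((-((m:ℝ)+1) * 2⁻¹) * cJ (m+1) (p:ℝ) (q:ℝ) (i+1)) * U^(i+1) := by rw [hk]
      _ = C (-((m:ℝ)+1)*2⁻¹) * (C (cJ (m+1) (p:ℝ) (q:ℝ) (i+1)) * U^(i+1)) := by
          simp only [C_mul]; ring
  · have hk := key4zero (p:ℝ) (q:ℝ) (by positivity) m
    calc C (cJ m ((p:ℝ)+1) ((q:ℝ)+1) 0 * (((p:ℝ)+1+((0:ℕ):ℝ)) * (-2⁻¹))) * U^0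
        = C (cJ m ((p:ℝ)+1) ((q:ℝ)+1) 0 * (((p:ℝ)+1) * (-2⁻¹))) * U^0 := by norm_num
      _ = C ((-((m:ℝ)+1) * 2⁻¹) * cJ (m+1) (p:ℝ) (q:ℝ) 0) * U^0 := by rw [hk]
      _ = C (-((m:ℝ)+1)*2⁻¹) * (C (cJ (m+1) (p:ℝ) (q:ℝ) 0) * U^0) := by
          simp only [C_mul]; ring

lemma dJp4 (m p q : ℕ) :
    derivative (U^(p+1) * (1-U)^(q+1) * Jp m ((p:ℝ)+1) ((q:ℝ)+1))
      = C (-((m:ℝ)+1) * 2⁻¹) * (U^p * (1-U)^q * Jp (m+1) (p:ℝ) (q:ℝ)) := by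
  rw [derivative_mul, derivative_mul, derivative_pow, derivative_pow, deriv_U, dV, derivJp]
  calc (C ((p+1:ℕ):ℝ) * U^(p+1-1) * C (-2⁻¹) * (1-U)^(q+1)
          + U^(p+1) * (C ((q+1:ℕ):ℝ) * (1-U)^(q+1-1) * C 2⁻¹)) * Jp m ((p:ℝ)+1) ((q:ℝ)+1)
        + U^(p+1) * (1-U)^(q+1)
          * (∑ i ∈ range (m+1), C (cJ m ((p:ℝ)+1) ((q:ℝ)+1) (i+1) * ((i:ℝ)+1) * (-2⁻¹)) * U^i)
      = (U^p * (1-U)^q)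
          * (C (-((p:ℝ)+1) * 2⁻¹) * ((1-U) * Jp m ((p:ℝ)+1) ((q:ℝ)+1))
            + C (((q:ℝ)+1) * 2⁻¹) * (U * Jp m ((p:ℝ)+1) ((q:ℝ)+1))
            + (U * (1-U)) * (∑ i ∈ range (m+1), C (cJ m ((p:ℝ)+1) ((q:ℝ)+1) (i+1) * ((i:ℝ)+1) * (-2⁻¹)) * U^i)) := by
        push_cast
        simp only [Nat.add_sub_cancel, C_mul, C_neg, pow_succ]
        ring
    _ = (U^p * (1-U)^q) * (C (-((m:ℝ)+1) * 2⁻¹) * Jp (m+1) (p:ℝ) (q:ℝ)) := by rw [dJp4T]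
    _ = C (-((m:ℝ)+1) * 2⁻¹) * (U^p * (1-U)^q * Jp (m+1) (p:ℝ) (q:ℝ)) := by ring

lemma iter1 (j : ℕ) : ∀ (m : ℕ) (a b : ℝ), 0 ≤ a →
    derivative^[j] (Jp (m+j) a b)
      = C ((2⁻¹:ℝ)^j * poch ((m:ℝ)+(j:ℝ)+a+b+1) j) * Jp m (a+(j:ℝ)) (b+(j:ℝ)) := by
  induction j with
  | zero =>
      intro m a b _
      simp [poch_zero]
  | succ j ih =>
      intro m a b ha
      rw [show m + (j+1) = (m+j)+1 from rfl, Function.iterate_succ_apply,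
        dJp1 (m+j) a b ha, Polynomial.iterate_derivative_C_mul,
        ih m (a+1) (b+1) (by linarith)]
      rw [show a+1+(j:ℝ) = a+((j+1:ℕ):ℝ) by push_cast; ring,
        show b+1+(j:ℝ) = b+((j+1:ℕ):ℝ) by push_cast; ring,
        ← mul_assoc, ← C_mul]
      congr 1
      rw [show (m:ℝ)+(((j:ℕ)+1:ℕ):ℝ)+a+b+1 = ((m:ℝ)+(j:ℝ)+a+b+2) by push_cast; ring,
        poch_succ_left,
        show (m:ℝ)+(j:ℝ)+a+b+2+1 = (m:ℝ)+(j:ℝ)+(a+1)+(b+1)+1 by ring]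
      push_cast
      ring

lemma iter2 (j : ℕ) : ∀ (m p : ℕ) (b : ℝ),
    derivative^[j] (U^(p+j) * Jp m ((p:ℝ)+(j:ℝ)) b)
      = C ((-2⁻¹:ℝ)^j * poch ((m:ℝ)+(p:ℝ)+1) j) * (U^p * Jp m (p:ℝ) (b+(j:ℝ))) := by
  induction j with
  | zero =>
      intro m p b
      simp [poch_zero]
  | succ j ih =>
      intro m p b
      rw [show p + (j+1) = (p+j)+1 from rfl, Function.iterate_succ_apply,
        show (p:ℝ)+((j+1:ℕ):ℝ) = ((p+j:ℕ):ℝ)+1 by push_cast; ring,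
        dJp2 m (p+j) b, Polynomial.iterate_derivative_C_mul,
        show ((p+j:ℕ):ℝ) = (p:ℝ)+(j:ℝ) by push_cast; ring,
        ih m p (b+1),
        show b+1+(j:ℝ) = b+((j+1:ℕ):ℝ) by push_cast; ring,
        ← mul_assoc, ← C_mul]
      congr 1
      rw [poch_succ_right]
      push_cast
      ring

lemma iter3 (j : ℕ) : ∀ (m q : ℕ) (a : ℝ), 0 ≤ a →
    derivative^[j] ((1-U)^(q+j) * Jp m a ((q:ℝ)+(j:ℝ)))
      = C ((2⁻¹:ℝ)^j * poch ((m:ℝ)+(q:ℝ)+1) j) * ((1-U)^q * Jp m (a+(j:ℝ)) (q:ℝ)) := by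
  induction j with
  | zero =>
      intro m q a _
      simp [poch_zero]
  | succ j ih =>
      intro m q a ha
      rw [show q + (j+1) = (q+j)+1 from rfl, Function.iterate_succ_apply,
        show (q:ℝ)+((j+1:ℕ):ℝ) = ((q+j:ℕ):ℝ)+1 by push_cast; ring,
        dJp3 m (q+j) a ha, Polynomial.iterate_derivative_C_mul,
        show ((q+j:ℕ):ℝ) = (q:ℝ)+(j:ℝ) by push_cast; ring,
        ih m q (a+1) (by linarith),
        show a+1+(j:ℝ) = a+((j+1:ℕ):ℝ) by push_cast; ring,
        ← mul_assoc, ← C_mul]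
      congr 1
      rw [poch_succ_right]
      push_cast
      ring

lemma iter4 (j : ℕ) : ∀ (m p q : ℕ),
    derivative^[j] (U^(p+j) * (1-U)^(q+j) * Jp m ((p:ℝ)+(j:ℝ)) ((q:ℝ)+(j:ℝ)))
      = C ((-2⁻¹:ℝ)^j * poch ((m:ℝ)+1) j) * (U^p * (1-U)^q * Jp (m+j) (p:ℝ) (q:ℝ)) := by
  induction j with
  | zero =>
      intro m p q
      simp [poch_zero]
  | succ j ih =>
      intro m p q
      rw [show p + (j+1) = (p+j)+1 from rfl, show q + (j+1) = (q+j)+1 from rfl,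
        Function.iterate_succ_apply,
        show (p:ℝ)+((j+1:ℕ):ℝ) = ((p+j:ℕ):ℝ)+1 by push_cast; ring,
        show (q:ℝ)+((j+1:ℕ):ℝ) = ((q+j:ℕ):ℝ)+1 by push_cast; ring,
        dJp4 m (p+j) (q+j), Polynomial.iterate_derivative_C_mul,
        show ((p+j:ℕ):ℝ) = (p:ℝ)+(j:ℝ) by push_cast; ring,
        show ((q+j:ℕ):ℝ) = (q:ℝ)+(j:ℝ) by push_cast; ring,
        ih (m+1) p q,
        show m+1+j = m+(j+1) by omega,
        ← mul_assoc, ← C_mul]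
      congr 1
      rw [show ((m+1:ℕ):ℝ)+1 = ((m:ℝ)+1)+1 by push_cast; ring, poch_succ_left]
      push_cast
      ring

lemma iter_deriv_eval (N : ℕ) (P : Polynomial ℝ) :
    deriv^[N] (fun t => P.eval t) = fun x => (derivative^[N] P).eval x := by
  induction N generalizing P with
  | zero => simp
  | succ N ih =>
      rw [Function.iterate_succ_apply, Function.iterate_succ_apply]
      rw [show deriv (fun t => P.eval t) = fun t => (derivative P).eval t from
        funext fun t => Polynomial.deriv _]
      exact ih (derivative P)

/-- `D_x^{α+β+3}[(x-1)^{β+1}(x+1)^{α+1} P_{n-1}^{β+1,α+1}(x)] = (1/2) (n)_{α+β+3} P_{n-2}^{α+2,β+2}(x)`. -/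
theorem iterated_deriv_S_outer (α β n : ℕ) (hn : 2 ≤ n) (x : ℝ) :
    deriv^[α + β + 3] (fun t => (t - 1) ^ (β + 1) * (t + 1) ^ (α + 1) *
        jacobiP (n - 1) ((β : ℝ) + 1) ((α : ℝ) + 1) t) x
      = (1 / 2) * poch (n : ℝ) (α + β + 3) * jacobiP (n - 2) ((α : ℝ) + 2) ((β : ℝ) + 2) x := by
  set P0 : Polynomial ℝ :=
    C (((-2:ℝ))^(β+1) * 2^(α+1)) *
      (U^(β+1) * (1-U)^(α+1) * Jp (n-1) ((β:ℝ)+1) ((α:ℝ)+1)) with hP0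
  have hfun : (fun t => (t - 1) ^ (β + 1) * (t + 1) ^ (α + 1) *
      jacobiP (n - 1) ((β : ℝ) + 1) ((α : ℝ) + 1) t) = fun t => P0.eval t := by
    funext t
    simp only [hP0, eval_mul, eval_pow, eval_C, eval_sub, eval_add, eval_one, eval_X,
      eval_U, eval_Jp]
    rw [show ((-2:ℝ))^(β+1) * 2^(α+1)
          * (((1-t)/2)^(β+1) * (1-(1-t)/2)^(α+1) * jacobiP (n-1) ((β:ℝ)+1) ((α:ℝ)+1) t)
        = ((-2) * ((1-t)/2))^(β+1) * ((2:ℝ) * (1-(1-t)/2))^(α+1)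
          * jacobiP (n-1) ((β:ℝ)+1) ((α:ℝ)+1) t by rw [mul_pow, mul_pow]; ring,
      show (-2:ℝ) * ((1-t)/2) = t - 1 by ring,
      show (2:ℝ) * (1-(1-t)/2) = t + 1 by ring]
  rw [hfun, iter_deriv_eval]
  rw [hP0, Polynomial.iterate_derivative_C_mul]
  rcases le_or_gt β α with hβα | hαβ
  · have hiter : derivative^[α+β+3] (U^(β+1) * (1-U)^(α+1) * Jp (n-1) ((β:ℝ)+1) ((α:ℝ)+1))
        = C ((-2⁻¹:ℝ)^(β+1) * poch ((((n-1):ℕ):ℝ)+1) (β+1))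
          * (C ((2⁻¹:ℝ)^(α-β) * poch ((((n+β):ℕ):ℝ)+((0:ℕ):ℝ)+1) (α-β))
          * (C ((2⁻¹:ℝ)^(β+2) * poch ((((n-2):ℕ):ℝ)+(((β+2):ℕ):ℝ)+((α-β:ℕ):ℝ)+((0:ℕ):ℝ)+1) (β+2))
            * Jp (n-2) ((α:ℝ)+2) ((β:ℝ)+2))) := by
      rw [show α+β+3 = (β+2) + ((α-β) + (β+1)) by omega,
        Function.iterate_add_apply derivative (β+2) ((α-β)+(β+1)),
        Function.iterate_add_apply derivative (α-β) (β+1)]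
      rw [show U^(β+1) * (1-U)^(α+1) * Jp (n-1) ((β:ℝ)+1) ((α:ℝ)+1)
          = U^(0+(β+1)) * (1-U)^((α-β)+(β+1))
              * Jp (n-1) (((0:ℕ):ℝ)+((β+1:ℕ):ℝ)) (((α-β:ℕ):ℝ)+((β+1:ℕ):ℝ)) by
        rw [show 0+(β+1) = β+1 by omega, show (α-β)+(β+1) = α+1 by omega,
          show ((0:ℕ):ℝ)+((β+1:ℕ):ℝ) = (β:ℝ)+1 by push_cast; ring,
          show ((α-β:ℕ):ℝ)+((β+1:ℕ):ℝ) = (α:ℝ)+1 by push_cast [Nat.cast_sub hβα]; ring]]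
      rw [iter4 (β+1) (n-1) 0 (α-β), Polynomial.iterate_derivative_C_mul]
      rw [show U^0 * (1-U)^(α-β) * Jp ((n-1)+(β+1)) ((0:ℕ):ℝ) ((α-β:ℕ):ℝ)
          = (1-U)^(0+(α-β)) * Jp (n+β) ((0:ℕ):ℝ) (((0:ℕ):ℝ)+((α-β:ℕ):ℝ)) by
        rw [pow_zero, one_mul, show 0+(α-β) = α-β by omega,
          show (n-1)+(β+1) = n+β by omega,
          show ((0:ℕ):ℝ)+((α-β:ℕ):ℝ) = ((α-β:ℕ):ℝ) by push_cast; ring]]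
      rw [iter3 (α-β) (n+β) 0 ((0:ℕ):ℝ) (by positivity), Polynomial.iterate_derivative_C_mul]
      rw [show ((1-U):Polynomial ℝ)^0 * Jp (n+β) (((0:ℕ):ℝ)+((α-β:ℕ):ℝ)) ((0:ℕ):ℝ)
          = Jp ((n-2)+(β+2)) ((α-β:ℕ):ℝ) ((0:ℕ):ℝ) by
        rw [pow_zero, one_mul, show (n-2)+(β+2) = n+β by omega,
          show ((0:ℕ):ℝ)+((α-β:ℕ):ℝ) = ((α-β:ℕ):ℝ) by push_cast; ring]]
      rw [Polynomial.iterate_derivative_C_mul,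
        iter1 (β+2) (n-2) ((α-β:ℕ):ℝ) ((0:ℕ):ℝ) (by positivity)]
      rw [show ((α-β:ℕ):ℝ)+((β+2:ℕ):ℝ) = (α:ℝ)+2 by push_cast [Nat.cast_sub hβα]; ring,
        show ((0:ℕ):ℝ)+((β+2:ℕ):ℝ) = (β:ℝ)+2 by push_cast; ring]
    rw [hiter]
    simp only [eval_mul, eval_C, eval_Jp]
    have hpow : (-2:ℝ)^(β+1) * 2^(α+1) * (-2⁻¹:ℝ)^(β+1) * (2⁻¹:ℝ)^(α-β) * (2⁻¹:ℝ)^(β+2)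
        = 1/2 := by
      have e1 : (-2:ℝ)^(β+1) * (-2⁻¹:ℝ)^(β+1) = 1 := by rw [← mul_pow]; norm_num
      have e2 : (2⁻¹:ℝ)^(α-β) * (2⁻¹:ℝ)^(β+2) = (2⁻¹:ℝ)^(α+2) := by
        rw [← pow_add]; congr 1; omega
      have e3 : (2:ℝ)^(α+1) * (2⁻¹:ℝ)^(α+2) = 1/2 := by
        have h : (2⁻¹:ℝ)^(α+2) = (2⁻¹:ℝ)^(α+1) * 2⁻¹ := by
          rw [show α+2 = (α+1)+1 by omega, pow_succ]
        rw [h, ← mul_assoc, ← mul_pow]; norm_num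
      calc (-2:ℝ)^(β+1) * 2^(α+1) * (-2⁻¹:ℝ)^(β+1) * (2⁻¹:ℝ)^(α-β) * (2⁻¹:ℝ)^(β+2)
          = ((-2:ℝ)^(β+1) * (-2⁻¹:ℝ)^(β+1)) * (2^(α+1) * ((2⁻¹:ℝ)^(α-β) * (2⁻¹:ℝ)^(β+2))) := by
            ring
        _ = 1/2 := by rw [e1, e2, e3, one_mul]
    have h1 : (((n-1):ℕ):ℝ)+1 = (n:ℝ) := by
      rw [Nat.cast_sub (by omega : 1 ≤ n)]; ring
    have h2 : (((n+β):ℕ):ℝ)+((0:ℕ):ℝ)+1 = (n:ℝ)+(((β+1):ℕ):ℝ) := by push_cast; ring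
    have h3 : (((n-2):ℕ):ℝ)+(((β+2):ℕ):ℝ)+((α-β:ℕ):ℝ)+((0:ℕ):ℝ)+1
        = (n:ℝ)+(((α+1):ℕ):ℝ) := by
      push_cast [Nat.cast_sub hβα, Nat.cast_sub (by omega : 2 ≤ n)]; ring
    rw [h1, h2, h3, show α+β+3 = (β+1)+(α-β)+(β+2) by omega,
      poch_add (n:ℝ) ((β+1)+(α-β)) (β+2), poch_add (n:ℝ) (β+1) (α-β),
      show ((((β+1)+(α-β)):ℕ):ℝ) = (((α+1):ℕ):ℝ) by norm_cast; omega]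
    linear_combination (poch (n:ℝ) (β+1) * poch ((n:ℝ)+(((β+1):ℕ):ℝ)) (α-β)
      * poch ((n:ℝ)+(((α+1):ℕ):ℝ)) (β+2) * jacobiP (n-2) ((α:ℝ)+2) ((β:ℝ)+2) x) * hpow
  · have hβα : α ≤ β := hαβ.le
    have hiter : derivative^[α+β+3] (U^(β+1) * (1-U)^(α+1) * Jp (n-1) ((β:ℝ)+1) ((α:ℝ)+1))
        = C ((-2⁻¹:ℝ)^(α+1) * poch ((((n-1):ℕ):ℝ)+1) (α+1))
          * (C ((-2⁻¹:ℝ)^(β-α) * poch ((((n+α):ℕ):ℝ)+((0:ℕ):ℝ)+1) (β-α))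
          * (C ((2⁻¹:ℝ)^(α+2) * poch ((((n-2):ℕ):ℝ)+(((α+2):ℕ):ℝ)+((0:ℕ):ℝ)+((β-α:ℕ):ℝ)+1) (α+2))
            * Jp (n-2) ((α:ℝ)+2) ((β:ℝ)+2))) := by
      rw [show α+β+3 = (α+2) + ((β-α) + (α+1)) by omega,
        Function.iterate_add_apply derivative (α+2) ((β-α)+(α+1)),
        Function.iterate_add_apply derivative (β-α) (α+1)]
      rw [show U^(β+1) * (1-U)^(α+1) * Jp (n-1) ((β:ℝ)+1) ((α:ℝ)+1)
          = U^((β-α)+(α+1)) * (1-U)^(0+(α+1))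
              * Jp (n-1) (((β-α:ℕ):ℝ)+((α+1:ℕ):ℝ)) (((0:ℕ):ℝ)+((α+1:ℕ):ℝ)) by
        rw [show (β-α)+(α+1) = β+1 by omega, show 0+(α+1) = α+1 by omega,
          show ((β-α:ℕ):ℝ)+((α+1:ℕ):ℝ) = (β:ℝ)+1 by push_cast [Nat.cast_sub hβα]; ring,
          show ((0:ℕ):ℝ)+((α+1:ℕ):ℝ) = (α:ℝ)+1 by push_cast; ring]]
      rw [iter4 (α+1) (n-1) (β-α) 0, Polynomial.iterate_derivative_C_mul]
      rw [show U^(β-α) * (1-U)^0 * Jp ((n-1)+(α+1)) ((β-α:ℕ):ℝ) ((0:ℕ):ℝ)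
          = U^(0+(β-α)) * Jp (n+α) (((0:ℕ):ℝ)+((β-α:ℕ):ℝ)) ((0:ℕ):ℝ) by
        rw [pow_zero, mul_one, show 0+(β-α) = β-α by omega,
          show (n-1)+(α+1) = n+α by omega,
          show ((0:ℕ):ℝ)+((β-α:ℕ):ℝ) = ((β-α:ℕ):ℝ) by push_cast; ring]]
      rw [iter2 (β-α) (n+α) 0 ((0:ℕ):ℝ), Polynomial.iterate_derivative_C_mul]
      rw [show U^0 * Jp (n+α) ((0:ℕ):ℝ) (((0:ℕ):ℝ)+((β-α:ℕ):ℝ))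
          = Jp ((n-2)+(α+2)) ((0:ℕ):ℝ) ((β-α:ℕ):ℝ) by
        rw [pow_zero, one_mul, show (n-2)+(α+2) = n+α by omega,
          show ((0:ℕ):ℝ)+((β-α:ℕ):ℝ) = ((β-α:ℕ):ℝ) by push_cast; ring]]
      rw [Polynomial.iterate_derivative_C_mul,
        iter1 (α+2) (n-2) ((0:ℕ):ℝ) ((β-α:ℕ):ℝ) (by positivity)]
      rw [show ((0:ℕ):ℝ)+((α+2:ℕ):ℝ) = (α:ℝ)+2 by push_cast; ring,
        show ((β-α:ℕ):ℝ)+((α+2:ℕ):ℝ) = (β:ℝ)+2 by push_cast [Nat.cast_sub hβα]; ring]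
    rw [hiter]
    simp only [eval_mul, eval_C, eval_Jp]
    have hpow : (-2:ℝ)^(β+1) * 2^(α+1) * (-2⁻¹:ℝ)^(α+1) * (-2⁻¹:ℝ)^(β-α) * (2⁻¹:ℝ)^(α+2)
        = 1/2 := by
      have e1 : (-2⁻¹:ℝ)^(α+1) * (-2⁻¹:ℝ)^(β-α) = (-2⁻¹:ℝ)^(β+1) := by
        rw [← pow_add]; congr 1; omega
      have e2 : (-2:ℝ)^(β+1) * (-2⁻¹:ℝ)^(β+1) = 1 := by rw [← mul_pow]; norm_num
      have e3 : (2:ℝ)^(α+1) * (2⁻¹:ℝ)^(α+2) = 1/2 := by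
        have h : (2⁻¹:ℝ)^(α+2) = (2⁻¹:ℝ)^(α+1) * 2⁻¹ := by
          rw [show α+2 = (α+1)+1 by omega, pow_succ]
        rw [h, ← mul_assoc, ← mul_pow]; norm_num
      calc (-2:ℝ)^(β+1) * 2^(α+1) * (-2⁻¹:ℝ)^(α+1) * (-2⁻¹:ℝ)^(β-α) * (2⁻¹:ℝ)^(α+2)
          = ((-2:ℝ)^(β+1) * ((-2⁻¹:ℝ)^(α+1) * (-2⁻¹:ℝ)^(β-α)))
              * (2^(α+1) * (2⁻¹:ℝ)^(α+2)) := by ring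
        _ = 1/2 := by rw [e1, e2, e3, one_mul]
    have h1 : (((n-1):ℕ):ℝ)+1 = (n:ℝ) := by
      rw [Nat.cast_sub (by omega : 1 ≤ n)]; ring
    have h2 : (((n+α):ℕ):ℝ)+((0:ℕ):ℝ)+1 = (n:ℝ)+(((α+1):ℕ):ℝ) := by push_cast; ring
    have h3 : (((n-2):ℕ):ℝ)+(((α+2):ℕ):ℝ)+((0:ℕ):ℝ)+((β-α:ℕ):ℝ)+1
        = (n:ℝ)+(((β+1):ℕ):ℝ) := by
      push_cast [Nat.cast_sub hβα, Nat.cast_sub (by omega : 2 ≤ n)]; ring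
    rw [h1, h2, h3, show α+β+3 = (α+1)+(β-α)+(α+2) by omega,
      poch_add (n:ℝ) ((α+1)+(β-α)) (α+2), poch_add (n:ℝ) (α+1) (β-α),
      show ((((α+1)+(β-α)):ℕ):ℝ) = (((β+1):ℕ):ℝ) by norm_cast; omega]
    linear_combination (poch (n:ℝ) (α+1) * poch ((n:ℝ)+(((α+1):ℕ):ℝ)) (β-α)
      * poch ((n:ℝ)+(((β+1):ℕ):ℝ)) (α+2) * jacobiP (n-2) ((α:ℝ)+2) ((β:ℝ)+2) x) * hpow
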